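/- arXiv:2011.03786 — 2 statements merged into one kernel-verified Lean document; each statement's English description precedes it below -/
import Mathlib

section
/- Let α = [0; a₁, a₂, …] ∈ (0,1) be irrational with convergents pₙ/qₙ and θₙ = qₙα − pₙ. Let (sᵢ), (tᵢ) be sequences of natural numbers with sᵢ < tᵢ, s_{i+1} = tᵢ + 2 for all i, and |tᵢ − sᵢ| → ∞, and let β = Σ_{i=1}^∞ θ_{tᵢ+1} viewed as an element of 𝕋. Then β ∈ t^s_{(qₙ)}(𝕋), i.e., qₙβ → 0 statistically in 𝕋. -/
open Filter Topology

noncomputable section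

/-- The circle group `𝕋 = ℝ/ℤ`. -/
abbrev Circle1 : Type := AddCircle (1 : ℝ)

/-- A set of naturals has natural density zero. -/
def DensityZero (A : Set ℕ) : Prop :=
  Tendsto (fun n : ℕ => ((A ∩ Set.Icc 1 n).ncard : ℝ) / n) atTop (𝓝 0)

/-- Statistical convergence to `0` of a sequence in the circle. -/
def StatTendstoZero (x : ℕ → Circle1) : Prop :=
  ∀ ε : ℝ, 0 < ε → DensityZero {n : ℕ | ε ≤ ‖x n‖}

/-- The characterized subgroup `t_(a_n)(𝕋)`. -/
def charSet (a : ℕ → ℤ) : Set Circle1 :=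
  {x : Circle1 | Tendsto (fun n : ℕ => a n • x) atTop (𝓝 0)}

/-- The statistically characterized subgroup `t^s_(a_n)(𝕋)`. -/
def statCharSet (a : ℕ → ℤ) : Set Circle1 :=
  {x : Circle1 | StatTendstoZero (fun n : ℕ => a n • x)}

namespace CF

/-- Gauss-map orbit of `α`: `G α 0 = α`, `G α (n+1) = {1 / G α n}`. -/
def G (α : ℝ) : ℕ → ℝ
  | 0 => α
  | n + 1 => Int.fract (G α n)⁻¹

/-- The partial quotients of the regular continued fraction `α = [0; a 1, a 2, …]`
(with the convention `a 0 = 0`). -/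
def a (α : ℝ) : ℕ → ℕ
  | 0 => 0
  | n + 1 => ⌊(G α n)⁻¹⌋₊

/-- Denominators of the convergents of the continued fraction of `α`. -/
def q (α : ℝ) : ℕ → ℕ
  | 0 => 1
  | 1 => a α 1
  | (n + 2) => a α (n + 2) * q α (n + 1) + q α n

/-- Numerators of the convergents of the continued fraction of `α`. -/
def p (α : ℝ) : ℕ → ℕ
  | 0 => 0
  | 1 => 1
  | (n + 2) => a α (n + 2) * p α (n + 1) + p α n

/-- `θ n = q n * α - p n`. -/
def θ (α : ℝ) (n : ℕ) : ℝ := (q α n : ℝ) * α - (p α n : ℝ)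

end CF

open CF

/-! Write `M i = t i + 1`. Since `q n θ m ≡ q m θ n (mod 1)`, `|θ m| ≤ 1 / q (m + 1)` and `q` at
least doubles every two steps, a term `θ (M i)` with `M i` far below `n` contributes at most
`q (M i) / q (n + 1)` to `‖q n β‖`, and one with `M i` far above `n` at most `q n / q (M i + 1)`;
these bounds decay geometrically along `i` because consecutive `M i` are at least two apart.
So `‖q n β‖ ≤ 4 · 2⁻ᵏ` unless `n` lies within `2k` of some `M i`, and since the gaps
`M (i + 1) - M i` tend to infinity, such `n` form a set of density zero. -/

lemma sum_range_succ_le_two_mul_of_two_mul_le {Q : ℕ → ℝ} (h₀ : 0 ≤ Q 0)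
    (hQ : ∀ i, 2 * Q i ≤ Q (i + 1)) (n : ℕ) : ∑ i ∈ Finset.range (n + 1), Q i ≤ 2 * Q n := by
  induction n with
  | zero => simp only [zero_add, Finset.sum_range_one]; linarith
  | succ n ih => rw [Finset.sum_range_succ]; linarith [hQ n]

lemma add_two_mul_le_of_forall_add_two_le {M : ℕ → ℕ} (hM : ∀ i, M i + 2 ≤ M (i + 1)) (i : ℕ) :
    M 0 + 2 * i ≤ M i := by
  induction i with
  | zero => rfl
  | succ i ih => have := hM i; omega

lemma norm_coe_intCast_add_le (z : ℤ) (x : ℝ) : ‖((z + x : ℝ) : Circle1)‖ ≤ |x| := by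
  rw [AddCircle.norm_eq]
  simpa using round_le ((z : ℝ) + x) z

lemma densityZero_mono {A B : Set ℕ} (h : A ⊆ B) (hB : DensityZero B) : DensityZero A := by
  refine squeeze_zero (fun N => by positivity) (fun N => ?_) hB
  gcongr
  exact (Set.finite_Icc 1 N).inter_of_right _

lemma densityZero_of_ncard_le {A : Set ℕ}
    (h : ∀ δ > 0, ∃ C : ℝ, ∀ N : ℕ, ((A ∩ Set.Icc 1 N).ncard : ℝ) ≤ δ * N + C) :
    DensityZero A := by
  refine tendsto_order.2 ⟨fun a ha => .of_forall fun N => ha.trans_le (by positivity),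
    fun ε hε => ?_⟩
  obtain ⟨C, hC⟩ := h (ε / 2) (by positivity)
  have hCN : ∀ᶠ N : ℕ in atTop, C / N < ε / 2 :=
    (tendsto_const_div_atTop_nhds_zero_nat C).eventually (gt_mem_nhds (by positivity))
  filter_upwards [hCN, eventually_gt_atTop 0] with N hN hN₀
  have hN₀' : (0 : ℝ) < N := by exact_mod_cast hN₀
  rw [div_lt_iff₀ hN₀'] at hN ⊢
  linarith [hC N]

lemma lt_add_div_add_one_of_gaps_ge {M : ℕ → ℕ} {L i₀ : ℕ} (hL : 0 < L)
    (hgap : ∀ i ≥ i₀, L ≤ M (i + 1) - M i)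
    {X i : ℕ} (hi : M i < X) : i < i₀ + X / L + 1 := by
  have hgrowth : ∀ j, j * L ≤ M (i₀ + j) := fun j => by
    induction j with
    | zero => simp
    | succ j ih => have := hgap (i₀ + j) (by omega); rw [Nat.succ_mul, ← add_assoc]; omega
  by_contra! hle
  have hX := Nat.lt_mul_div_succ X hL
  generalize X / L = d at hle hX
  have hshift : M (i₀ + (i - i₀)) = M i := by congr 1; omega
  have := calc X < L * (d + 1) := hX
    _ ≤ L * (i - i₀) := Nat.mul_le_mul_left L (by omega)
    _ ≤ M i := by rw [mul_comm, ← hshift]; exact hgrowth _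
  omega

lemma ncard_near_inter_Icc_le {M : ℕ → ℕ} {K N J : ℕ} (hJ : ∀ i, M i < N + K → i < J) :
    ({n | ∃ i, n < M i + K ∧ M i < n + K} ∩ Set.Icc 1 N).ncard ≤ J * (2 * K) := by
  have hsub : {n | ∃ i, n < M i + K ∧ M i < n + K} ∩ Set.Icc 1 N ⊆
      ↑((Finset.range J).biUnion fun i => Finset.Ico (M i - K) (M i + K)) := by
    rintro n ⟨⟨i, h₁, h₂⟩, -, hnN⟩
    simp only [Finset.coe_biUnion, Finset.coe_Ico, Set.mem_iUnion, Set.mem_Ico, Finset.mem_coe,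
      Finset.mem_range]
    exact ⟨i, hJ i (by omega), by omega, h₁⟩
  calc _ ≤ ((Finset.range J).biUnion fun i => Finset.Ico (M i - K) (M i + K)).card := by
        rw [← Set.ncard_coe_finset]; exact Set.ncard_le_ncard hsub
    _ ≤ ∑ i ∈ Finset.range J, (Finset.Ico (M i - K) (M i + K)).card := Finset.card_biUnion_le
    _ ≤ ∑ i ∈ Finset.range J, 2 * K := Finset.sum_le_sum fun i _ => by rw [Nat.card_Ico]; omega
    _ = J * (2 * K) := by simp

lemma densityZero_near {M : ℕ → ℕ} (hgap : Tendsto (fun i => M (i + 1) - M i) atTop atTop)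
    (K : ℕ) : DensityZero {n | ∃ i, n < M i + K ∧ M i < n + K} := by
  refine densityZero_of_ncard_le fun δ hδ => ?_
  obtain ⟨L, hL⟩ := exists_nat_gt ((2 * K + 1) / δ)
  have hδL : (2 * K : ℝ) ≤ δ * L := by rw [div_lt_iff₀ hδ] at hL; linarith
  have hL₀ : 0 < L := by exact_mod_cast (by positivity : (0 : ℝ) < (2 * K + 1) / δ).trans hL
  obtain ⟨i₀, hi₀⟩ := eventually_atTop.1 (hgap.eventually_ge_atTop L)
  refine ⟨2 * K * (i₀ + 1) + δ * K, fun N => ?_⟩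
  have hcard := ncard_near_inter_Icc_le (J := i₀ + (N + K) / L + 1) (K := K) (N := N)
    fun i hi => lt_add_div_add_one_of_gaps_ge hL₀ hi₀ hi
  have hdiv : (((N + K) / L : ℕ) : ℝ) * L ≤ N + K := by exact_mod_cast Nat.div_mul_le_self _ _
  calc _ ≤ ((i₀ + (N + K) / L + 1 : ℕ) : ℝ) * (2 * K) := by exact_mod_cast hcard
    _ = 2 * K * (i₀ + 1) + (((N + K) / L : ℕ) : ℝ) * (2 * K) := by push_cast; ring
    _ ≤ 2 * K * (i₀ + 1) + δ * (N + K) := by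
        have := mul_le_mul_of_nonneg_left hδL (Nat.cast_nonneg (α := ℝ) ((N + K) / L))
        nlinarith
    _ = δ * N + (2 * K * (i₀ + 1) + δ * K) := by ring

namespace CF

variable {α : ℝ}

lemma G_mem_Ioo_and_irrational (hα : α ∈ Set.Ioo 0 1) (hirr : Irrational α) (n : ℕ) :
    G α n ∈ Set.Ioo 0 1 ∧ Irrational (G α n) := by
  induction n with
  | zero => exact ⟨hα, hirr⟩
  | succ n ih =>
    have hfract : Irrational (G α (n + 1)) := ih.2.inv.sub_intCast _
    exact ⟨⟨(Int.fract_nonneg _).lt_of_ne' hfract.ne_zero, Int.fract_lt_one _⟩, hfract⟩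

lemma one_lt_inv_G (hα : α ∈ Set.Ioo 0 1) (hirr : Irrational α) (n : ℕ) : 1 < (G α n)⁻¹ :=
  have h := (G_mem_Ioo_and_irrational hα hirr n).1
  (one_lt_inv₀ h.1).2 h.2

lemma a_succ_eq (hα : α ∈ Set.Ioo 0 1) (hirr : Irrational α) (n : ℕ) :
    (a α (n + 1) : ℝ) = (G α n)⁻¹ - G α (n + 1) := by
  have h : (0 : ℝ) ≤ (G α n)⁻¹ := (one_lt_inv_G hα hirr n).le.trans' zero_le_one
  rw [a, G, Int.fract, ← Int.natCast_floor_eq_floor h]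
  push_cast
  ring

lemma one_le_a_succ (hα : α ∈ Set.Ioo 0 1) (hirr : Irrational α) (n : ℕ) : 1 ≤ a α (n + 1) :=
  Nat.le_floor (by exact_mod_cast (one_lt_inv_G hα hirr n).le)

lemma q_add_two (n : ℕ) : q α (n + 2) = a α (n + 2) * q α (n + 1) + q α n := rfl

lemma theta_add_two (n : ℕ) : θ α (n + 2) = a α (n + 2) * θ α (n + 1) + θ α n := by
  simp only [θ, q_add_two, p]
  push_cast
  ring

lemma theta_eq_neg_one_pow_mul_prod (hα : α ∈ Set.Ioo 0 1) (hirr : Irrational α) (n : ℕ) :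
    θ α n = (-1) ^ n * ∏ k ∈ Finset.range (n + 1), G α k := by
  induction n using Nat.twoStepInduction with
  | zero => simp [θ, q, p, G]
  | one =>
    have hG0 : G α 0 ≠ 0 := (G_mem_Ioo_and_irrational hα hirr 0).1.1.ne'
    simp only [θ, q, p, Finset.prod_range_succ, Finset.prod_range_zero, a_succ_eq hα hirr 0]
    simp only [G] at hG0 ⊢
    field_simp
    ring
  | more n ih₀ ih₁ =>
    have hG : G α (n + 1) ≠ 0 := (G_mem_Ioo_and_irrational hα hirr (n + 1)).1.1.ne'
    rw [theta_add_two, ih₀, ih₁, a_succ_eq hα hirr (n + 1), Finset.prod_range_succ _ (n + 2),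
      Finset.prod_range_succ _ (n + 1)]
    field_simp
    ring

lemma neg_one_pow_mul_theta (hα : α ∈ Set.Ioo 0 1) (hirr : Irrational α) (n : ℕ) :
    (-1) ^ n * θ α n = |θ α n| := by
  have hprod : 0 < ∏ k ∈ Finset.range (n + 1), G α k :=
    Finset.prod_pos fun k _ => (G_mem_Ioo_and_irrational hα hirr k).1.1
  rw [theta_eq_neg_one_pow_mul_prod hα hirr, ← mul_assoc, ← pow_add, ← two_mul, pow_mul,
    abs_mul, abs_pow, abs_neg, abs_one, one_pow, abs_of_pos hprod]
  norm_num

lemma theta_mul_q_succ_sub (n : ℕ) :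
    θ α n * q α (n + 1) - θ α (n + 1) * q α n = (-1) ^ n := by
  induction n with
  | zero => simp only [θ, q, p, Nat.cast_one, CharP.cast_eq_zero, pow_zero]; ring
  | succ n ih =>
    rw [theta_add_two, q_add_two, pow_succ, ← ih]
    push_cast
    ring

lemma one_le_q (hα : α ∈ Set.Ioo 0 1) (hirr : Irrational α) (n : ℕ) : 1 ≤ q α n := by
  induction n using Nat.twoStepInduction with
  | zero => rfl
  | one => exact one_le_a_succ hα hirr 0
  | more n _ ih₁ => rw [q_add_two]; omega

lemma abs_theta_le (hα : α ∈ Set.Ioo 0 1) (hirr : Irrational α) (n : ℕ) :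
    |θ α n| ≤ (q α (n + 1) : ℝ)⁻¹ := by
  have hq : (0 : ℝ) < q α (n + 1) := by exact_mod_cast one_le_q hα hirr (n + 1)
  -- consecutive `θ`s alternate in sign, so the determinant identity reads
  -- `|θ n| q (n+1) + |θ (n+1)| q n = 1`
  have hdet : |θ α n| * q α (n + 1) + |θ α (n + 1)| * q α n = 1 := by
    rw [← neg_one_pow_mul_theta hα hirr, ← neg_one_pow_mul_theta hα hirr, pow_succ]
    have hsq : ((-1 : ℝ) ^ n) * (-1) ^ n = 1 := by rw [← mul_pow]; norm_num
    linear_combination (-1) ^ n * theta_mul_q_succ_sub (α := α) n + hsq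
  rw [← one_div, le_div_iff₀ hq]
  nlinarith [abs_nonneg (θ α (n + 1)), (q α n).cast_nonneg (α := ℝ)]

lemma q_le_q_succ (hα : α ∈ Set.Ioo 0 1) (hirr : Irrational α) (n : ℕ) : q α n ≤ q α (n + 1) := by
  cases n with
  | zero => exact one_le_q hα hirr 1
  | succ n => rw [q_add_two]; nlinarith [one_le_a_succ hα hirr (n + 1)]

lemma q_mono (hα : α ∈ Set.Ioo 0 1) (hirr : Irrational α) : Monotone (q α) :=
  monotone_nat_of_le_succ (q_le_q_succ hα hirr)

lemma two_pow_mul_q_le (hα : α ∈ Set.Ioo 0 1) (hirr : Irrational α) {n m k : ℕ}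
    (h : n + 2 * k ≤ m) : 2 ^ k * q α n ≤ q α m := by
  induction k generalizing m with
  | zero => simpa using q_mono hα hirr h
  | succ k ih =>
    obtain ⟨m, rfl⟩ : ∃ m', m = m' + 2 := ⟨m - 2, by omega⟩
    have h₀ := ih (m := m) (by omega)
    have h₁ := q_le_q_succ hα hirr m
    rw [q_add_two, pow_succ]
    nlinarith [one_le_a_succ hα hirr (m + 1)]

lemma q_div_q_le (hα : α ∈ Set.Ioo 0 1) (hirr : Irrational α) {n m k : ℕ}
    (h : n + 2 * k ≤ m) : (q α n : ℝ) / q α m ≤ 2⁻¹ ^ k := by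
  have hq : (0 : ℝ) < q α m := by exact_mod_cast one_le_q hα hirr m
  have hle : (2 : ℝ) ^ k * q α n ≤ q α m := by exact_mod_cast two_pow_mul_q_le hα hirr h
  rw [div_le_iff₀ hq, inv_pow, ← div_eq_inv_mul, le_div_iff₀ (by positivity)]
  linarith

lemma q_mul_theta_sub (m n : ℕ) :
    (q α n : ℝ) * θ α m - q α m * θ α n = ((q α m * p α n - q α n * p α m : ℤ) : ℝ) := by
  simp only [θ]
  push_cast
  ring

lemma abs_theta_comp_le (hα : α ∈ Set.Ioo 0 1) (hirr : Irrational α) {M : ℕ → ℕ}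
    (hM : ∀ i, M i + 2 ≤ M (i + 1)) (i : ℕ) :
    |θ α (M i)| ≤ (q α (M 0 + 1) : ℝ)⁻¹ * 2⁻¹ ^ i := by
  have hq : (0 : ℝ) < q α (M 0 + 1) := by exact_mod_cast one_le_q hα hirr _
  calc |θ α (M i)| ≤ (q α (M i + 1) : ℝ)⁻¹ := abs_theta_le hα hirr _
    _ = (q α (M 0 + 1) : ℝ)⁻¹ * (q α (M 0 + 1) / q α (M i + 1)) := by field_simp
    _ ≤ (q α (M 0 + 1) : ℝ)⁻¹ * 2⁻¹ ^ i := by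
      gcongr
      exact q_div_q_le hα hirr (by have := add_two_mul_le_of_forall_add_two_le hM i; omega)

lemma summable_abs_theta_comp (hα : α ∈ Set.Ioo 0 1) (hirr : Irrational α) {M : ℕ → ℕ}
    (hM : ∀ i, M i + 2 ≤ M (i + 1)) : Summable fun i => |θ α (M i)| :=
  .of_nonneg_of_le (fun _ => abs_nonneg _) (abs_theta_comp_le hα hirr hM)
    ((summable_geometric_of_lt_one (by norm_num) (by norm_num)).mul_left _)

lemma abs_q_mul_tsum_theta_comp_le (hα : α ∈ Set.Ioo 0 1) (hirr : Irrational α) {M : ℕ → ℕ}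
    (hM : ∀ i, M i + 2 ≤ M (i + 1)) {n k : ℕ} (h : n + 2 * k ≤ M 0) :
    |(q α n : ℝ) * ∑' i, θ α (M i)| ≤ 2 * 2⁻¹ ^ k := by
  have hsum := summable_abs_theta_comp hα hirr hM
  calc |(q α n : ℝ) * ∑' i, θ α (M i)| ≤ q α n * ∑' i, |θ α (M i)| := by
        rw [abs_mul, Nat.abs_cast]
        refine mul_le_mul_of_nonneg_left ?_ (Nat.cast_nonneg _)
        have hsum' : Summable fun i => ‖θ α (M i)‖ := by simpa only [Real.norm_eq_abs] using hsum
        simpa only [Real.norm_eq_abs] using norm_tsum_le_tsum_norm hsum'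
    _ ≤ q α n * ∑' i, (q α (M 0 + 1) : ℝ)⁻¹ * (2 : ℝ)⁻¹ ^ i := by
        refine mul_le_mul_of_nonneg_left ?_ (Nat.cast_nonneg _)
        exact hsum.tsum_le_tsum (abs_theta_comp_le hα hirr hM)
          ((summable_geometric_of_lt_one (by norm_num) (by norm_num)).mul_left _)
    _ = 2 * (q α n / q α (M 0 + 1)) := by
        rw [tsum_mul_left, tsum_geometric_inv_two]
        ring
    _ ≤ 2 * 2⁻¹ ^ k := by gcongr; exact q_div_q_le hα hirr (by omega)

lemma abs_sum_q_comp_mul_theta_le (hα : α ∈ Set.Ioo 0 1) (hirr : Irrational α) {M : ℕ → ℕ}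
    (hM : ∀ i, M i + 2 ≤ M (i + 1)) {I n k : ℕ} (h : ∀ i < I, M i + 2 * k ≤ n) :
    |(∑ i ∈ Finset.range I, (q α (M i) : ℝ)) * θ α n| ≤ 2 * 2⁻¹ ^ k := by
  obtain _ | J := I
  · simp
  have hdouble : ∀ i, 2 * (q α (M i) : ℝ) ≤ q α (M (i + 1)) := fun i => by
    exact_mod_cast two_pow_mul_q_le hα hirr (k := 1) (by have := hM i; omega)
  calc |(∑ i ∈ Finset.range (J + 1), (q α (M i) : ℝ)) * θ α n|
      = (∑ i ∈ Finset.range (J + 1), (q α (M i) : ℝ)) * |θ α n| := by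
        rw [abs_mul, abs_of_nonneg (by positivity)]
    _ ≤ 2 * q α (M J) * (q α (n + 1) : ℝ)⁻¹ := by
        gcongr
        · exact sum_range_succ_le_two_mul_of_two_mul_le (by positivity) hdouble J
        · exact abs_theta_le hα hirr n
    _ = 2 * (q α (M J) / q α (n + 1)) := by ring
    _ ≤ 2 * 2⁻¹ ^ k := by gcongr; exact q_div_q_le hα hirr (by have := h J; omega)

lemma exists_q_mul_tsum_theta_comp_eq_intCast_add (hα : α ∈ Set.Ioo 0 1) (hirr : Irrational α)
    {M : ℕ → ℕ} (hM : ∀ i, M i + 2 ≤ M (i + 1)) (n I : ℕ) : ∃ z : ℤ,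
    q α n * ∑' i, θ α (M i) = z + ((∑ i ∈ Finset.range I, (q α (M i) : ℝ)) * θ α n
      + q α n * ∑' i, θ α (M (i + I))) := by
  refine ⟨∑ i ∈ Finset.range I, (q α (M i) * p α n - q α n * p α (M i) : ℤ), ?_⟩
  have hsplit := ((summable_abs_theta_comp hα hirr hM).of_abs.sum_add_tsum_nat_add I).symm
  rw [hsplit, Int.cast_sum, Finset.sum_mul, mul_add, Finset.mul_sum]
  simp only [← q_mul_theta_sub]
  rw [Finset.sum_sub_distrib]
  ring

lemma norm_q_smul_tsum_theta_comp_le (hα : α ∈ Set.Ioo 0 1) (hirr : Irrational α) {M : ℕ → ℕ}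
    (hM : ∀ i, M i + 2 ≤ M (i + 1)) {n k : ℕ} (hsep : ∀ i, M i + 2 * k ≤ n ∨ n + 2 * k ≤ M i) :
    ‖(q α n : ℤ) • ((∑' i, θ α (M i) : ℝ) : Circle1)‖ ≤ 4 * 2⁻¹ ^ k := by
  have hmono : StrictMono M := strictMono_nat_of_lt_succ fun i => by have := hM i; omega
  have hex : ∃ I, n ≤ M I := ⟨n, hmono.id_le n⟩
  obtain ⟨I, hI, hmin⟩ : ∃ I, n ≤ M I ∧ ∀ i < I, M i < n :=
    ⟨Nat.find hex, Nat.find_spec hex, fun i hi => lt_of_not_ge (Nat.find_min hex hi)⟩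
  have hhead : ∀ i < I, M i + 2 * k ≤ n := fun i hi => by
    have := hmin i hi; have := hsep i; omega
  have htail : n + 2 * k ≤ M (0 + I) := by
    have := hsep I; rw [zero_add]; omega
  have hMI : ∀ i, M (i + I) + 2 ≤ M (i + 1 + I) := fun i => by
    simpa [add_right_comm] using hM (i + I)
  obtain ⟨z, hz⟩ := exists_q_mul_tsum_theta_comp_eq_intCast_add hα hirr hM n I
  rw [← AddCircle.coe_zsmul, zsmul_eq_mul, Int.cast_natCast, hz]
  calc _ ≤ _ := norm_coe_intCast_add_le z _
    _ ≤ _ := abs_add_le _ _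
    _ ≤ 2 * 2⁻¹ ^ k + 2 * 2⁻¹ ^ k := add_le_add (abs_sum_q_comp_mul_theta_le hα hirr hM hhead)
        (abs_q_mul_tsum_theta_comp_le hα hirr hMI htail)
    _ = 4 * 2⁻¹ ^ k := by ring

end CF

/-- **Proposition 2.3.** An element supported off a member of `𝕀`, with digits `1`,
belongs to `t^s_(qₙ)(𝕋)`. -/
theorem stmt_4 (α : ℝ) (hα : α ∈ Set.Ioo (0 : ℝ) 1) (hirr : Irrational α)
    (s t : ℕ → ℕ) (hst : ∀ i, s i < t i) (hcons : ∀ i, s (i + 1) = t i + 2)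
    (hgap : Tendsto (fun i => t i - s i) atTop atTop)
    (β : ℝ) (hβ : β = ∑' i : ℕ, θ α (t i + 1)) :
    (↑β : Circle1) ∈ statCharSet (fun n => (q α n : ℤ)) := by
  set M : ℕ → ℕ := fun i => t i + 1
  have hM : ∀ i, M i + 2 ≤ M (i + 1) := fun i => by
    simp only [M]; have := hst (i + 1); have := hcons i; omega
  have hgapM : Tendsto (fun i => M (i + 1) - M i) atTop atTop :=
    tendsto_atTop_mono (fun i => by simp only [Function.comp_apply, M]; have := hcons i; omega)
      (hgap.comp (tendsto_add_atTop_nat 1))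
  intro ε hε
  obtain ⟨k, hk⟩ : ∃ k : ℕ, 4 * (2 : ℝ)⁻¹ ^ k < ε :=
    (((tendsto_pow_atTop_nhds_zero_of_lt_one (by norm_num) (by norm_num)).const_mul 4).eventually
      (gt_mem_nhds (by simpa using hε))).exists
  refine densityZero_mono (fun n hn => ?_) (densityZero_near hgapM (2 * k))
  show ∃ i, n < M i + 2 * k ∧ M i < n + 2 * k
  by_contra! hfar
  have hsep : ∀ i, M i + 2 * k ≤ n ∨ n + 2 * k ≤ M i := fun i => by have := hfar i; omega
  rw [hβ] at hn
  exact (CF.norm_q_smul_tsum_theta_comp_le hα hirr hM hsep).trans_lt hk |>.not_ge hn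
end
end

section
/- For any sequence of integers (aₙ), the statistically characterized subgroup t^s_{(aₙ)}(𝕋) is an F_{σδ} (hence Borel) subgroup of 𝕋 containing the characterized subgroup t_{(aₙ)}(𝕋). -/
open Filter Topology

noncomputable section

open CF

/-!
Statistical convergence of `c n • x` to `0` is equivalent to: for every `k`, eventually at most
`n / (k + 1)` of the indices `m ≤ n` have `‖c m • x‖ > 1 / (k + 1)`; a single parameter `k` can
control both the threshold and the density. For fixed `n` that count is lower semicontinuous in `x`
(the inequality is strict and the index set finite), so each condition cuts out a closed set, and
the whole set is `⋂ₖ ⋃_N ⋂_{n ≥ N}` of closed sets. The subgroup property is the triangle inequality,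
and convergence implies statistical convergence since only finitely many indices are exceptional.
-/

open Set

lemma ncard_inter_Icc_mono {A B : Set ℕ} (h : A ⊆ B) (n : ℕ) :
    (A ∩ Icc 1 n).ncard ≤ (B ∩ Icc 1 n).ncard :=
  Set.ncard_le_ncard (inter_subset_inter_left _ h) ((finite_Icc 1 n).inter_of_right B)

lemma densityZero_iff_eventually_le {A : Set ℕ} :
    DensityZero A ↔ ∀ ε > 0, ∀ᶠ n : ℕ in atTop, ((A ∩ Icc 1 n).ncard : ℝ) ≤ ε * n := by
  have hpos : ∀ᶠ n : ℕ in atTop, (0 : ℝ) < n :=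
    (eventually_gt_atTop 0).mono fun n hn => Nat.cast_pos.2 hn
  rw [DensityZero, tendsto_order]
  refine ⟨fun h ε hε => ?_, fun h => ⟨fun a ha => ?_, fun ε hε => ?_⟩⟩
  · filter_upwards [h.2 ε hε, hpos] with n hn hn0
    exact ((div_lt_iff₀ hn0).1 hn).le
  · exact Eventually.of_forall fun n => ha.trans_le (by positivity)
  · filter_upwards [h (ε / 2) (half_pos hε), hpos] with n hn hn0
    exact ((div_le_iff₀ hn0).2 hn).trans_lt (half_lt_self hε)

lemma DensityZero.mono {A B : Set ℕ} (hB : DensityZero B) (h : A ⊆ B) : DensityZero A := by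
  rw [densityZero_iff_eventually_le] at hB ⊢
  exact fun ε hε => (hB ε hε).mono fun n hn =>
    (Nat.cast_le.2 (ncard_inter_Icc_mono h n)).trans hn

lemma DensityZero.union {A B : Set ℕ} (hA : DensityZero A) (hB : DensityZero B) :
    DensityZero (A ∪ B) := by
  rw [densityZero_iff_eventually_le] at hA hB ⊢
  intro ε hε
  filter_upwards [hA (ε / 2) (half_pos hε), hB (ε / 2) (half_pos hε)] with n hAn hBn
  calc (((A ∪ B) ∩ Icc 1 n).ncard : ℝ)
      ≤ (A ∩ Icc 1 n).ncard + (B ∩ Icc 1 n).ncard := by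
        rw [union_inter_distrib_right]; exact_mod_cast ncard_union_le _ _
    _ ≤ ε * n := by linarith

lemma Set.Finite.densityZero {A : Set ℕ} (hA : A.Finite) : DensityZero A := by
  rw [densityZero_iff_eventually_le]
  intro ε hε
  filter_upwards [tendsto_natCast_atTop_atTop.eventually_ge_atTop (A.ncard / ε)] with n hn
  calc ((A ∩ Icc 1 n).ncard : ℝ) ≤ A.ncard := Nat.cast_le.2 (ncard_le_ncard inter_subset_left hA)
    _ ≤ ε * n := by rwa [div_le_iff₀' hε] at hn

lemma densityZero_setOf_le_of_tendsto_zero {u : ℕ → ℝ} (hu : Tendsto u atTop (𝓝 0)) :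
    ∀ ε > 0, DensityZero {n | ε ≤ u n} := fun _ hε =>
  (eventually_cofinite.1 (Nat.cofinite_eq_atTop ▸ hu.eventually_lt_const hε)).densityZero.mono
    fun _ hn => not_lt.2 hn

lemma forall_densityZero_setOf_le_iff (u : ℕ → ℝ) :
    (∀ ε > 0, DensityZero {n | ε ≤ u n}) ↔ ∀ k : ℕ, ∀ᶠ n : ℕ in atTop,
      (({m | 1 / ((k : ℝ) + 1) < u m} ∩ Icc 1 n).ncard : ℝ) ≤ 1 / ((k : ℝ) + 1) * n := by
  refine ⟨fun h k => ?_, fun h ε hε => densityZero_iff_eventually_le.2 fun η hη => ?_⟩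
  · have hk : (0 : ℝ) < 1 / ((k : ℝ) + 1) := Nat.one_div_pos_of_nat
    exact densityZero_iff_eventually_le.1
      ((h _ hk).mono fun m (hm : _ < u m) => hm.le) _ hk
  · obtain ⟨k, hk⟩ := exists_nat_one_div_lt (lt_min hε hη)
    filter_upwards [h k] with n hn
    calc (({m | ε ≤ u m} ∩ Icc 1 n).ncard : ℝ)
        ≤ ({m | 1 / ((k : ℝ) + 1) < u m} ∩ Icc 1 n).ncard :=
          Nat.cast_le.2 <| ncard_inter_Icc_mono
            (fun m hm => (hk.trans_le (min_le_left _ _)).trans_le hm) n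
      _ ≤ 1 / ((k : ℝ) + 1) * n := hn
      _ ≤ η * n := by gcongr; exact hk.le.trans (min_le_right _ _)

lemma lowerSemicontinuous_ncard_setOf_mem {X ι : Type*} [TopologicalSpace X] {U : ι → Set X}
    (hU : ∀ i, IsOpen (U i)) {s : Set ι} (hs : s.Finite) :
    LowerSemicontinuous fun x => ({i | x ∈ U i} ∩ s).ncard := by
  intro x t ht
  have hnear : ∀ᶠ y in 𝓝 x, ∀ i ∈ {i | x ∈ U i} ∩ s, y ∈ U i :=
    (hs.inter_of_right _).eventually_all.2 fun i hi => (hU i).mem_nhds hi.1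
  filter_upwards [hnear] with y hy
  exact ht.trans_le (ncard_le_ncard (fun i hi => ⟨hy i hi, hi.2⟩) (hs.inter_of_right _))

theorem exists_isClosed_iInter_iUnion_eq_setOf_densityZero {X : Type*} [TopologicalSpace X]
    {u : ℕ → X → ℝ} (hu : ∀ n, LowerSemicontinuous (u n)) :
    ∃ F : ℕ → ℕ → Set X, (∀ k N, IsClosed (F k N)) ∧
      {x | ∀ ε > 0, DensityZero {n | ε ≤ u n x}} = ⋂ k, ⋃ N, F k N := by
  refine ⟨fun k N => ⋂ n ∈ Ici N,
    {x | (({m | 1 / ((k : ℝ) + 1) < u m x} ∩ Icc 1 n).ncard : ℝ) ≤ 1 / ((k : ℝ) + 1) * n},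
    fun k N => isClosed_biInter fun n _ => ?_, ?_⟩
  · exact (((continuous_of_discreteTopology (f := ((↑) : ℕ → ℝ))).comp_lowerSemicontinuous
      (lowerSemicontinuous_ncard_setOf_mem (fun m => (hu m).isOpen_preimage _) (finite_Icc 1 n))
      Nat.mono_cast).isClosed_preimage _)
  · ext x
    simp only [mem_ofPred_eq, forall_densityZero_setOf_le_iff, eventually_atTop, mem_iInter,
      mem_iUnion, mem_Ici]

def statNullSeq (E : Type*) [SeminormedAddCommGroup E] : AddSubgroup (ℕ → E) where
  carrier := {v | ∀ ε > 0, DensityZero {n | ε ≤ ‖v n‖}}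
  zero_mem' _ hε := finite_empty.densityZero.mono fun _ (hn : _ ≤ ‖(0 : E)‖) =>
    absurd (hn.trans_eq norm_zero) hε.not_ge
  add_mem' {v w} hv hw ε hε := ((hv _ (half_pos hε)).union (hw _ (half_pos hε))).mono
    fun n (hn : ε ≤ ‖v n + w n‖) => by
      by_contra! h
      simp only [mem_union, mem_ofPred_eq, not_or, not_le] at h
      linarith [norm_add_le (v n) (w n)]
  neg_mem' {v} hv ε hε := by simpa only [Pi.neg_apply, norm_neg] using hv ε hε

/-- **Theorem A.** `t^s_(aₙ)(𝕋)` is an `F_{σδ}` subgroup of `𝕋` containing `t_(aₙ)(𝕋)`. -/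
theorem stmt_17 (c : ℕ → ℤ) :
    (∃ H : AddSubgroup Circle1, (H : Set Circle1) = statCharSet c) ∧
    (∃ F : ℕ → ℕ → Set Circle1, (∀ i j, IsClosed (F i j)) ∧
        statCharSet c = ⋂ i : ℕ, ⋃ j : ℕ, F i j) ∧
    charSet c ⊆ statCharSet c :=
  ⟨⟨(statNullSeq Circle1).comap (AddMonoidHom.pi fun n => zsmulAddGroupHom (c n)), rfl⟩,
    exists_isClosed_iInter_iUnion_eq_setOf_densityZero fun n =>
      (continuous_norm.comp (continuous_zsmul (c n))).lowerSemicontinuous,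
    fun _ hx => densityZero_setOf_le_of_tendsto_zero (tendsto_zero_iff_norm_tendsto_zero.1 hx)⟩
end
end
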